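/- For any matrix Z and λ ≥ 0, the unique minimizer of A ↦ (1/2)‖Z − A‖_F² + λ‖A‖_* is A = S_λ(Z), the singular value soft-thresholding of Z at level λ. -/

import Mathlib

/-!
With `Z = U D Vᵀ` and `Â = U S_λ(D) Vᵀ`, the residual `Z - Â = U (D - S_λ(D)) Vᵀ` is rectangular
diagonal with entries in `[-λ, λ]`, so its spectral norm is at most `λ`; by the duality between
spectral and nuclear norm, `⟨Z - Â, A⟩ ≤ λ ‖A‖_*` for every `A`, with equality at `A = Â` because
`S_λ` shrinks each nonzero singular value by exactly `λ`. Expanding the square around `Â` gives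
`½‖Z - A‖² + λ‖A‖_* = ½‖Z - Â‖² + λ‖Â‖_* + ½‖Â - A‖² + (λ‖A‖_* - ⟨Z - Â, A⟩)`,
and both correction terms are nonnegative, the first vanishing only at `A = Â`.
-/

open Matrix

/-- Squared Frobenius norm. -/
def frobSq {m n : Type*} [Fintype m] [Fintype n] (A : Matrix m n ℝ) : ℝ :=
  ∑ i, ∑ j, (A i j) ^ 2

/-- Nuclear norm: sum of singular values. -/
noncomputable def nuclearNorm {N K : ℕ} (A : Matrix (Fin N) (Fin K) ℝ) : ℝ :=
  ∑ i, Real.sqrt ((Matrix.isHermitian_conjTranspose_mul_self A).eigenvalues i)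

/-- A full singular value decomposition `Z = U D Vᵀ`. -/
def IsSVD {N K : ℕ} (Z : Matrix (Fin N) (Fin K) ℝ) (U : Matrix (Fin N) (Fin N) ℝ)
    (D : Matrix (Fin N) (Fin K) ℝ) (V : Matrix (Fin K) (Fin K) ℝ) : Prop :=
  Uᵀ * U = 1 ∧ Vᵀ * V = 1 ∧ (∀ i j, i.val ≠ j.val → D i j = 0) ∧
  (∀ i j, 0 ≤ D i j) ∧ Z = U * D * Vᵀ

/-- Soft thresholding of the singular value matrix. -/
def softDiag {N K : ℕ} (lam : ℝ) (D : Matrix (Fin N) (Fin K) ℝ) : Matrix (Fin N) (Fin K) ℝ :=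
  fun i j => if i.val = j.val then max (D i j - lam) 0 else 0

section SupportSubsingleton

variable {ι : Type*} [Fintype ι] {f : ι → ℝ}

theorem sq_sum_eq_sum_sq_of_support_subsingleton (hf : (Function.support f).Subsingleton) :
    (∑ i, f i) ^ 2 = ∑ i, f i ^ 2 := by
  rw [sq, Finset.sum_mul_sum]
  refine Finset.sum_congr rfl fun i _ => ?_
  rw [sq, Fintype.sum_eq_single i]
  intro j hji
  by_contra h
  exact hji (hf (right_ne_zero_of_mul h) (left_ne_zero_of_mul h))

theorem sum_le_of_support_subsingleton (hf : (Function.support f).Subsingleton) {c : ℝ}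
    (hc : 0 ≤ c) (hfc : ∀ i, f i ≤ c) : ∑ i, f i ≤ c := by
  by_cases h : ∃ i, f i ≠ 0
  · obtain ⟨i, hi⟩ := h
    rw [Fintype.sum_eq_single i fun j hji => by_contra fun hj => hji (hf hj hi)]
    exact hfc i
  · push Not at h
    simpa [h] using hc

end SupportSubsingleton

theorem dotProduct_le_sqrt_mul_sqrt {n : Type*} [Fintype n] (u v : n → ℝ) :
    u ⬝ᵥ v ≤ √(u ⬝ᵥ u) * √(v ⬝ᵥ v) := by
  simpa only [dotProduct, sq] using Real.sum_mul_le_sqrt_mul_sqrt Finset.univ u v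

theorem mulVec_dotProduct_mulVec {m n : Type*} [Fintype m] [Fintype n] (A : Matrix m n ℝ)
    (w : n → ℝ) : A *ᵥ w ⬝ᵥ A *ᵥ w = w ⬝ᵥ (Aᵀ * A) *ᵥ w := by
  rw [← mulVec_mulVec, dotProduct_mulVec w, vecMul_transpose]

theorem mulVec_dotProduct_mulVec_of_orthogonal {n : Type*} [Fintype n] [DecidableEq n]
    {U : Matrix n n ℝ} (hU : Uᵀ * U = 1) (w : n → ℝ) : U *ᵥ w ⬝ᵥ U *ᵥ w = w ⬝ᵥ w := by
  rw [mulVec_dotProduct_mulVec, hU, one_mulVec]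

section Frobenius

variable {m n : Type*} [Fintype m] [Fintype n]

def frobInner (P Q : Matrix m n ℝ) : ℝ :=
  ∑ i, ∑ j, P i j * Q i j

theorem frobInner_eq_trace (P Q : Matrix m n ℝ) : frobInner P Q = trace (Pᵀ * Q) := by
  simp only [frobInner, trace, diag, mul_apply, transpose_apply]
  exact Finset.sum_comm

theorem frobInner_sub_right (P Q R : Matrix m n ℝ) :
    frobInner P (Q - R) = frobInner P Q - frobInner P R := by
  simp only [frobInner, Matrix.sub_apply, mul_sub, Finset.sum_sub_distrib]

theorem frobSq_add (P Q : Matrix m n ℝ) :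
    frobSq (P + Q) = frobSq P + 2 * frobInner P Q + frobSq Q := by
  simp only [frobSq, frobInner, Matrix.add_apply, Finset.mul_sum, ← Finset.sum_add_distrib]
  exact Finset.sum_congr rfl fun i _ => Finset.sum_congr rfl fun j _ => by ring

theorem frobSq_nonneg (A : Matrix m n ℝ) : 0 ≤ frobSq A := by
  unfold frobSq
  positivity

theorem frobSq_eq_zero_iff {A : Matrix m n ℝ} : frobSq A = 0 ↔ A = 0 := by
  rw [frobSq, Fintype.sum_eq_zero_iff_of_nonneg fun i => by positivity, ← Matrix.ext_iff]
  simp only [funext_iff, Pi.zero_apply,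
    Fintype.sum_eq_zero_iff_of_nonneg fun _ => sq_nonneg _, sq_eq_zero_iff, Matrix.zero_apply]

theorem frobInner_orthogonal_mul_mul [DecidableEq m] [DecidableEq n] {U : Matrix m m ℝ}
    {V : Matrix n n ℝ} (hU : Uᵀ * U = 1) (hV : Vᵀ * V = 1) (P Q : Matrix m n ℝ) :
    frobInner (U * P * Vᵀ) (U * Q * Vᵀ) = frobInner P Q := by
  have hUU (X : Matrix m n ℝ) : Uᵀ * (U * X) = X := by rw [← Matrix.mul_assoc, hU, Matrix.one_mul]
  rw [frobInner_eq_trace, frobInner_eq_trace, transpose_mul, transpose_mul, transpose_transpose]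
  simp only [Matrix.mul_assoc, hUU]
  rw [trace_mul_comm, Matrix.mul_assoc, Matrix.mul_assoc, hV, Matrix.mul_one]

theorem frobInner_eq_sum_mulVec_dotProduct [DecidableEq n] {W : Matrix n n ℝ} (hW : W * Wᵀ = 1)
    (P Q : Matrix m n ℝ) :
    frobInner P Q = ∑ j, P *ᵥ Wᵀ j ⬝ᵥ Q *ᵥ Wᵀ j := by
  have hPQ : frobInner P Q = frobInner (P * W) (Q * W) := by
    rw [frobInner_eq_trace, frobInner_eq_trace, transpose_mul, Matrix.mul_assoc, trace_mul_comm Wᵀ]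
    simp only [Matrix.mul_assoc, hW, Matrix.mul_one]
  rw [hPQ, frobInner]
  exact Finset.sum_comm

end Frobenius

/-- For positively homogeneous `φ`, `hle` and `heq` say that `Z - Â` is a subgradient of `φ`
at `Â`. -/
theorem unique_min_of_residual_subgradient {m n : Type*} [Fintype m] [Fintype n]
    (φ : Matrix m n ℝ → ℝ) (Z Â : Matrix m n ℝ) (hle : ∀ B, frobInner (Z - Â) B ≤ φ B)
    (heq : frobInner (Z - Â) Â = φ Â) (A : Matrix m n ℝ) :
    1 / 2 * frobSq (Z - Â) + φ Â ≤ 1 / 2 * frobSq (Z - A) + φ A ∧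
      (1 / 2 * frobSq (Z - A) + φ A = 1 / 2 * frobSq (Z - Â) + φ Â → A = Â) := by
  have hsplit : 1 / 2 * frobSq (Z - A) + φ A
      = 1 / 2 * frobSq (Z - Â) + φ Â + 1 / 2 * frobSq (Â - A) + (φ A - frobInner (Z - Â) A) := by
    rw [show Z - A = (Z - Â) + (Â - A) by abel, frobSq_add, frobInner_sub_right, heq]
    ring
  have hgap := hle A
  have hsq := frobSq_nonneg (Â - A)
  refine ⟨by linarith, fun h => ?_⟩
  have : frobSq (Â - A) = 0 := by linarith
  exact (sub_eq_zero.mp (frobSq_eq_zero_iff.mp this)).symm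

def IsRectDiagonal {α : Type*} [Zero α] {m n : ℕ} (C : Matrix (Fin m) (Fin n) α) : Prop :=
  ∀ (i : Fin m) (j : Fin n), (i : ℕ) ≠ j → C i j = 0

namespace IsRectDiagonal

variable {m n : ℕ}

theorem sub {α : Type*} [SubtractionMonoid α] {C E : Matrix (Fin m) (Fin n) α}
    (hC : IsRectDiagonal C) (hE : IsRectDiagonal E) : IsRectDiagonal (C - E) := fun i j hij => by
  rw [Matrix.sub_apply, hC i j hij, hE i j hij, sub_zero]

theorem support_col_subsingleton {α : Type*} [Zero α] {C : Matrix (Fin m) (Fin n) α}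
    (hC : IsRectDiagonal C) (j : Fin n) : (Function.support fun i => C i j).Subsingleton :=
  fun i hi i' hi' => Fin.ext <| (not_not.mp (mt (hC i j) hi)).trans
    (not_not.mp (mt (hC i' j) hi')).symm

theorem transpose_mul_self {C : Matrix (Fin m) (Fin n) ℝ} (hC : IsRectDiagonal C) :
    Cᵀ * C = diagonal fun j => ∑ i, C i j ^ 2 := by
  ext j j'
  rw [mul_apply]
  by_cases hjj : j = j'
  · subst hjj
    simp only [transpose_apply, diagonal_apply_eq, sq]
  · rw [diagonal_apply_ne _ hjj]
    refine Finset.sum_eq_zero fun i _ => ?_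
    by_cases hij : (i : ℕ) = j
    · rw [transpose_apply, hC i j' fun h => hjj (Fin.ext (hij.symm.trans h)), mul_zero]
    · rw [transpose_apply, hC i j hij, zero_mul]

theorem mulVec_dotProduct_mulVec_le {C : Matrix (Fin m) (Fin n) ℝ} (hC : IsRectDiagonal C)
    {lam : ℝ} (hCb : ∀ i j, |C i j| ≤ lam) (y : Fin n → ℝ) :
    C *ᵥ y ⬝ᵥ C *ᵥ y ≤ lam ^ 2 * (y ⬝ᵥ y) := by
  have hcol (j : Fin n) : ∑ i, C i j ^ 2 ≤ lam ^ 2 :=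
    sum_le_of_support_subsingleton
      (by simpa only [Function.support_pow _ two_ne_zero] using hC.support_col_subsingleton j)
      (sq_nonneg lam) fun i => sq_le_sq' (abs_le.mp (hCb i j)).1 (abs_le.mp (hCb i j)).2
  rw [mulVec_dotProduct_mulVec, hC.transpose_mul_self, dotProduct, dotProduct, Finset.mul_sum]
  refine Finset.sum_le_sum fun j _ => ?_
  rw [mulVec_diagonal, ← mul_assoc, mul_comm (y j), mul_assoc]
  exact mul_le_mul_of_nonneg_right (hcol j) (mul_self_nonneg _)

end IsRectDiagonal

theorem Matrix.IsHermitian.sum_comp_eigenvalues_of_charpoly_eq {n : Type*} [Fintype n]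
    [DecidableEq n] {M : Matrix n n ℝ} (hM : M.IsHermitian) {d : n → ℝ}
    (h : M.charpoly = (diagonal d).charpoly) (f : ℝ → ℝ) :
    ∑ i, f (hM.eigenvalues i) = ∑ i, f (d i) := by
  have hroots := hM.roots_charpoly_eq_eigenvalues
  rw [h, charpoly_diagonal, Polynomial.roots_prod _ _ (by
    simp [Finset.prod_ne_zero_iff, Polynomial.X_sub_C_ne_zero])] at hroots
  simp only [Polynomial.roots_X_sub_C, Multiset.bind_singleton, RCLike.ofReal_real_eq_id,
    Function.id_comp] at hroots
  simpa only [Finset.sum_eq_multiset_sum, Multiset.map_map, Function.comp_def] using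
    congrArg (fun s => (s.map f).sum) hroots.symm

theorem nuclearNorm_orthogonal_mul_mul {m n : ℕ} {U : Matrix (Fin m) (Fin m) ℝ}
    {V : Matrix (Fin n) (Fin n) ℝ} (hU : Uᵀ * U = 1) (hV : Vᵀ * V = 1)
    (A : Matrix (Fin m) (Fin n) ℝ) : nuclearNorm (U * A * Vᵀ) = nuclearNorm A := by
  have hUU (X : Matrix (Fin m) (Fin n) ℝ) : Uᵀ * (U * X) = X := by
    rw [← Matrix.mul_assoc, hU, Matrix.one_mul]
  have hcharpoly : ((U * A * Vᵀ)ᴴ * (U * A * Vᵀ)).charpoly = (Aᴴ * A).charpoly := by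
    simp only [conjTranspose_eq_transpose_of_trivial, transpose_mul, transpose_transpose,
      Matrix.mul_assoc, hUU]
    rw [charpoly_mul_comm, Matrix.mul_assoc, Matrix.mul_assoc, hV, Matrix.mul_one]
  unfold nuclearNorm
  rw [(IsHermitian.eigenvalues_eq_eigenvalues_iff _ _).mpr hcharpoly]

theorem nuclearNorm_eq_sum_of_isRectDiagonal {m n : ℕ} {E : Matrix (Fin m) (Fin n) ℝ}
    (hE : IsRectDiagonal E) (hE₀ : ∀ i j, 0 ≤ E i j) : nuclearNorm E = ∑ i, ∑ j, E i j := by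
  have hEE : (Eᴴ * E).charpoly = (diagonal fun j => ∑ i, E i j ^ 2).charpoly := by
    rw [conjTranspose_eq_transpose_of_trivial, hE.transpose_mul_self]
  rw [nuclearNorm, IsHermitian.sum_comp_eigenvalues_of_charpoly_eq _ hEE]
  refine (Finset.sum_congr rfl fun j _ => ?_).trans Finset.sum_comm
  rw [← sq_sum_eq_sum_sq_of_support_subsingleton (hE.support_col_subsingleton j),
    Real.sqrt_sq (Finset.sum_nonneg fun i _ => hE₀ i j)]

/-- Test `⟨G, A⟩` along an orthonormal eigenbasis `w j` of `Aᵀ A`, where `‖A w j‖² = σ j²`, and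
apply Cauchy–Schwarz to each `⟨G w j, A w j⟩`. -/
theorem frobInner_le_mul_nuclearNorm {m n : ℕ} {G : Matrix (Fin m) (Fin n) ℝ} {lam : ℝ}
    (hlam : 0 ≤ lam) (hG : ∀ v, G *ᵥ v ⬝ᵥ G *ᵥ v ≤ lam ^ 2 * (v ⬝ᵥ v))
    (A : Matrix (Fin m) (Fin n) ℝ) : frobInner G A ≤ lam * nuclearNorm A := by
  set hH := isHermitian_conjTranspose_mul_self A
  set W : Matrix (Fin n) (Fin n) ℝ := (hH.eigenvectorUnitary : Matrix (Fin n) (Fin n) ℝ)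
  have hWWt : W * Wᵀ = 1 := by
    rw [← conjTranspose_eq_transpose_of_trivial, ← star_eq_conjTranspose]
    exact mem_unitaryGroup_iff.mp hH.eigenvectorUnitary.2
  have hunit (j : Fin n) : Wᵀ j ⬝ᵥ Wᵀ j = 1 := by
    have := congrArg (fun M => M j j) (mul_eq_one_comm.mp hWWt)
    rwa [mul_apply', one_apply_eq] at this
  have heig (j : Fin n) : A *ᵥ Wᵀ j ⬝ᵥ A *ᵥ Wᵀ j = hH.eigenvalues j := by
    rw [mulVec_dotProduct_mulVec, ← conjTranspose_eq_transpose_of_trivial A,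
      show Wᵀ j = ⇑(hH.eigenvectorBasis j) from rfl, hH.mulVec_eigenvectorBasis, dotProduct_smul,
      ← show Wᵀ j = ⇑(hH.eigenvectorBasis j) from rfl, hunit, smul_eq_mul, mul_one]
  rw [frobInner_eq_sum_mulVec_dotProduct hWWt, nuclearNorm, Finset.mul_sum]
  refine Finset.sum_le_sum fun j _ => ?_
  calc G *ᵥ Wᵀ j ⬝ᵥ A *ᵥ Wᵀ j ≤ √(G *ᵥ Wᵀ j ⬝ᵥ G *ᵥ Wᵀ j) * √(A *ᵥ Wᵀ j ⬝ᵥ A *ᵥ Wᵀ j) :=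
        dotProduct_le_sqrt_mul_sqrt _ _
    _ ≤ √(lam ^ 2) * √(hH.eigenvalues j) := by
        rw [heig]
        gcongr
        simpa [hunit] using hG (Wᵀ j)
    _ = lam * √(hH.eigenvalues j) := by rw [Real.sqrt_sq hlam]

section SoftThreshold

variable {m n : ℕ} (lam : ℝ) (D : Matrix (Fin m) (Fin n) ℝ)

theorem isRectDiagonal_softDiag : IsRectDiagonal (softDiag lam D) := fun i j hij => by
  simp [softDiag, hij]

theorem softDiag_nonneg (i : Fin m) (j : Fin n) : 0 ≤ softDiag lam D i j := by
  unfold softDiag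
  split_ifs
  exacts [le_max_right _ _, le_rfl]

theorem abs_sub_softDiag_le {lam : ℝ} (hlam : 0 ≤ lam) {D : Matrix (Fin m) (Fin n) ℝ}
    (hD : IsRectDiagonal D) (hD₀ : ∀ i j, 0 ≤ D i j) (i : Fin m) (j : Fin n) :
    |(D - softDiag lam D) i j| ≤ lam := by
  by_cases hij : (i : ℕ) = j
  · have := hD₀ i j
    simp only [Matrix.sub_apply, softDiag, if_pos hij, abs_le]
    constructor <;> cases max_cases (D i j - lam) 0 <;> linarith
  · simpa [hD i j hij, isRectDiagonal_softDiag lam D i j hij] using hlam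

/-- Where `S_λ` does not vanish it shrinks `d` by exactly `λ`, so the residual there is `λ`. -/
theorem frobInner_sub_softDiag_softDiag :
    frobInner (D - softDiag lam D) (softDiag lam D) = lam * ∑ i, ∑ j, softDiag lam D i j := by
  have hentry (i : Fin m) (j : Fin n) :
      (D - softDiag lam D) i j * softDiag lam D i j = lam * softDiag lam D i j := by
    simp only [Matrix.sub_apply, softDiag]
    split_ifs
    · rcases max_cases (D i j - lam) 0 with ⟨h, _⟩ | ⟨h, _⟩ <;> rw [h] <;> ring
    · ring
  simp only [frobInner, hentry, Finset.mul_sum]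

end SoftThreshold

/-- Cai–Candès–Shen: for any matrix `Z` and `λ ≥ 0`, the unique minimizer of
`A ↦ (1/2)‖Z − A‖_F² + λ‖A‖_*` is the singular value soft-thresholding `S_λ(Z) = U D_λ Vᵀ`. -/
theorem svt_prox_nuclear_norm {N K : ℕ} (lam : ℝ) (hlam : 0 ≤ lam)
    (Z : Matrix (Fin N) (Fin K) ℝ)
    (U : Matrix (Fin N) (Fin N) ℝ) (D : Matrix (Fin N) (Fin K) ℝ)
    (V : Matrix (Fin K) (Fin K) ℝ) (hSVD : IsSVD Z U D V) :
    ∀ A : Matrix (Fin N) (Fin K) ℝ,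
      (1 / 2) * frobSq (Z - U * softDiag lam D * Vᵀ) + lam * nuclearNorm (U * softDiag lam D * Vᵀ)
        ≤ (1 / 2) * frobSq (Z - A) + lam * nuclearNorm A ∧
      ((1 / 2) * frobSq (Z - A) + lam * nuclearNorm A
          = (1 / 2) * frobSq (Z - U * softDiag lam D * Vᵀ)
            + lam * nuclearNorm (U * softDiag lam D * Vᵀ)
        → A = U * softDiag lam D * Vᵀ) := by
  obtain ⟨hU, hV, hD, hD₀, rfl⟩ := hSVD
  have hres : U * D * Vᵀ - U * softDiag lam D * Vᵀ = U * (D - softDiag lam D) * Vᵀ := by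
    rw [Matrix.mul_sub, Matrix.sub_mul]
  have hVt : Vᵀᵀ * Vᵀ = 1 := by rw [transpose_transpose, mul_eq_one_comm.mp hV]
  refine unique_min_of_residual_subgradient (fun A => lam * nuclearNorm A) _ _ (fun B => ?_) ?_
  · rw [hres]
    refine frobInner_le_mul_nuclearNorm hlam (fun v => ?_) B
    rw [← mulVec_mulVec, ← mulVec_mulVec, mulVec_dotProduct_mulVec_of_orthogonal hU,
      ← mulVec_dotProduct_mulVec_of_orthogonal hVt v]
    exact (IsRectDiagonal.sub hD (isRectDiagonal_softDiag lam D)).mulVec_dotProduct_mulVec_le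
      (abs_sub_softDiag_le hlam hD hD₀) _
  · rw [hres, frobInner_orthogonal_mul_mul hU hV, nuclearNorm_orthogonal_mul_mul hU hV,
      nuclearNorm_eq_sum_of_isRectDiagonal (isRectDiagonal_softDiag lam D) (softDiag_nonneg lam D),
      frobInner_sub_softDiag_softDiag]
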